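/- Every row contraction T : H ⊗ ℂ^d → H decomposes as T = V - C where V is a row partial isometry with initial space ker(D_T), the contraction C is pure (‖C h‖ < ‖h‖ for all nonzero h in its initial space), ker(C)^⊥ ⊆ ker(V), and ran(C) ⊆ ran(V)^⊥. -/

import Mathlib

open ContinuousLinearMap

set_option synthInstance.maxHeartbeats 1000000
set_option maxHeartbeats 1000000

noncomputable section

instance piLpComplete {d : ℕ} {H : Type*} [NormedAddCommGroup H]
    [InnerProductSpace ℂ H] [CompleteSpace H] :
    CompleteSpace (PiLp 2 fun _ : Fin d => H) :=
  inferInstance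

/-- Every row contraction `T : H^d → H` decomposes as `T = V - C` where `V` is a
row partial isometry with initial space `ker D_T` (`= (ran D_T)ᗮ`), `C` is a pure contraction on
its initial space, `(ker C)ᗮ ⊆ ker V` and `ran C ⊆ (ran V)ᗮ`.  Here `D_T` is the positive square
root of `1 - T*T`. -/
theorem stmt_3 {d : ℕ} {H : Type*} [NormedAddCommGroup H] [InnerProductSpace ℂ H]
    [CompleteSpace H]
    (T : PiLp 2 (fun _ : Fin d => H) →L[ℂ] H) (hT : ‖T‖ ≤ 1)
    (D : PiLp 2 (fun _ : Fin d => H) →L[ℂ] PiLp 2 (fun _ : Fin d => H))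
    (hD : D.IsPositive) (hD2 : D ∘L D = 1 - (adjoint T) ∘L T) :
    ∃ V C : PiLp 2 (fun _ : Fin d => H) →L[ℂ] H,
      T = V - C ∧
      IsIdempotentElem ((adjoint V) ∘L V) ∧
      (LinearMap.ker (V : PiLp 2 (fun _ : Fin d => H) →ₗ[ℂ] H))ᗮ = LinearMap.ker (D : PiLp 2 (fun _ : Fin d => H) →ₗ[ℂ] PiLp 2 (fun _ : Fin d => H)) ∧
      ‖C‖ ≤ 1 ∧
      (∀ h ∈ (LinearMap.ker (C : PiLp 2 (fun _ : Fin d => H) →ₗ[ℂ] H))ᗮ, h ≠ 0 → ‖C h‖ < ‖h‖) ∧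
      (LinearMap.ker (C : PiLp 2 (fun _ : Fin d => H) →ₗ[ℂ] H))ᗮ ≤ LinearMap.ker (V : PiLp 2 (fun _ : Fin d => H) →ₗ[ℂ] H) ∧
      LinearMap.range (C : PiLp 2 (fun _ : Fin d => H) →ₗ[ℂ] H) ≤
        (LinearMap.range (V : PiLp 2 (fun _ : Fin d => H) →ₗ[ℂ] H))ᗮ := by
  set E := PiLp 2 (fun _ : Fin d => H)
  set K : Submodule ℂ E := LinearMap.ker (D : E →ₗ[ℂ] E) with hK
  haveI : CompleteSpace K := (isClosed_ker D).completeSpace_coe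
  set P : E →L[ℂ] E := K.subtypeL ∘L K.orthogonalProjectionOnto with hPdef
  -- basic facts about P
  have hPmem : ∀ x : E, P x ∈ K := fun x => (K.orthogonalProjectionOnto x).2
  have hPK : ∀ x ∈ K, P x = x := fun x hx => Submodule.starProjection_eq_self_iff.mpr hx
  have hDP : ∀ x : E, D (P x) = 0 := fun x => hPmem x
  have hPperp : ∀ x ∈ Kᗮ, P x = 0 := by
    intro x hx
    have : (K.orthogonalProjectionOnto x : K) = 0 :=
      Submodule.orthogonalProjectionOnto_apply_of_mem_orthogonal hx
    simpa [hPdef] using congrArg (Subtype.val) this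
  have hsubP : ∀ x : E, x - P x ∈ Kᗮ := fun x => Submodule.sub_starProjection_mem_orthogonal x
  -- the key inner product identity
  have hDsa : adjoint D = D := hD.isSelfAdjoint.adjoint_eq
  have hTT : ∀ x y : E, (inner ℂ (T x) (T y) : ℂ) = inner ℂ x y - inner ℂ (D x) (D y) := by
    intro x y
    have h1 : adjoint T (T y) = y - D (D y) := by
      have := congrArg (fun A : E →L[ℂ] E => A y) hD2
      simp only [ContinuousLinearMap.comp_apply, ContinuousLinearMap.sub_apply,
        ContinuousLinearMap.one_apply] at this
      rw [this]; abel
    calc (inner ℂ (T x) (T y) : ℂ) = inner ℂ x (adjoint T (T y)) := (adjoint_inner_right T x (T y)).symm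
      _ = inner ℂ x y - inner ℂ x (D (D y)) := by rw [h1, inner_sub_right]
      _ = inner ℂ x y - inner ℂ (D x) (D y) := by
          rw [← adjoint_inner_right D x (D y), hDsa]
  have hTn : ∀ x : E, ‖T x‖ ^ 2 = ‖x‖ ^ 2 - ‖D x‖ ^ 2 := by
    intro x
    have := hTT x x
    rw [inner_self_eq_norm_sq_to_K, inner_self_eq_norm_sq_to_K, inner_self_eq_norm_sq_to_K] at this
    exact_mod_cast this
  -- the decomposition
  refine ⟨T ∘L P, T ∘L P - T, by abel, ?_, ?_, ?_, ?_, ?_, ?_⟩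
  · -- V*V is idempotent
    have hVV : adjoint (T ∘L P) ∘L (T ∘L P) = P := by
      ext x
      have hPsa : adjoint P = P := (isSelfAdjoint_starProjection K)
      simp only [ContinuousLinearMap.comp_apply]
      rw [adjoint_comp, ContinuousLinearMap.comp_apply, hPsa]
      have h1 : adjoint T (T (P x)) = P x - D (D (P x)) := by
        have := congrArg (fun A : E →L[ℂ] E => A (P x)) hD2
        simp only [ContinuousLinearMap.comp_apply, ContinuousLinearMap.sub_apply,
          ContinuousLinearMap.one_apply] at this
        rw [this]; abel
      rw [h1, hDP, map_zero, sub_zero, hPK _ (hPmem x)]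
    rw [hVV]
    exact ContinuousLinearMap.ext fun x => show P (P x) = P x from hPK _ (hPmem x)
  · -- (ker V)ᗮ = ker D
    have hker : LinearMap.ker (T ∘L P : E →ₗ[ℂ] H) = Kᗮ := by
      apply le_antisymm
      · intro x hx
        have hx0 : T (P x) = 0 := hx
        have h2 : ‖P x‖ ^ 2 = 0 := by
          have := hTn (P x)
          rw [hx0, hDP] at this
          simpa using this.symm
        have hPx : P x = 0 := by
          have : ‖P x‖ = 0 := by nlinarith [norm_nonneg (P x)]
          exact norm_eq_zero.mp this
        have := hsubP x
        rwa [hPx, sub_zero] at this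
      · intro x hx
        have : P x = 0 := hPperp x hx
        show T (P x) = 0
        rw [this, map_zero]
    rw [hker, Submodule.orthogonal_orthogonal]
  · -- ‖C‖ ≤ 1
    refine ContinuousLinearMap.opNorm_le_bound _ zero_le_one (fun x => ?_)
    have h1 : (T ∘L P - T) x = T (P x - x) := by
      simp [map_sub]
    rw [h1, one_mul]
    have h2 : ‖T (P x - x)‖ ≤ ‖P x - x‖ :=
      le_trans (T.le_opNorm _) (by nlinarith [norm_nonneg (P x - x), T.opNorm_nonneg])
    have h3 : ‖P x - x‖ ≤ ‖x‖ := by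
      have hortho : (inner ℂ (P x) (x - P x) : ℂ) = 0 :=
        Submodule.inner_right_of_mem_orthogonal (hPmem x) (hsubP x)
      have hpyth := norm_add_sq_eq_norm_sq_add_norm_sq_of_inner_eq_zero _ _ hortho
      have hx : P x + (x - P x) = x := by abel
      rw [hx] at hpyth
      have : ‖P x - x‖ = ‖x - P x‖ := by rw [norm_sub_rev]
      rw [this]
      nlinarith [norm_nonneg (x - P x), norm_nonneg x, norm_nonneg (P x)]
    linarith
  · -- purity
    intro h hh hne
    have hKC : K ≤ LinearMap.ker (T ∘L P - T : E →ₗ[ℂ] H) := by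
      intro x hx
      show (T ∘L P - T) x = 0
      simp [hPK x hx]
    have hh' : h ∈ Kᗮ := Submodule.orthogonal_le hKC hh
    have hCh : (T ∘L P - T) h = -(T h) := by
      simp [hPperp h hh']
    rw [hCh, norm_neg]
    have hDh : D h ≠ 0 := by
      intro h0
      have hmem : h ∈ K := h0
      exact hne (inner_self_eq_zero.mp ((Submodule.mem_orthogonal K h).mp hh' h hmem))
    have hDh2 : 0 < ‖D h‖ ^ 2 := by
      have := norm_pos_iff.mpr hDh
      positivity
    have := hTn h
    nlinarith [norm_nonneg (T h), norm_nonneg h]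
  · -- (ker C)ᗮ ≤ ker V
    have hKC : K ≤ LinearMap.ker (T ∘L P - T : E →ₗ[ℂ] H) := by
      intro x hx
      show (T ∘L P - T) x = 0
      simp [hPK x hx]
    intro x hx
    have hx' : x ∈ Kᗮ := Submodule.orthogonal_le hKC hx
    show T (P x) = 0
    rw [hPperp x hx', map_zero]
  · -- range C ≤ (range V)ᗮ
    rintro _ ⟨x, rfl⟩
    rw [Submodule.mem_orthogonal]
    rintro _ ⟨z, rfl⟩
    have h1 : (T ∘L P - T) x = T (P x - x) := by simp [map_sub]
    show (inner ℂ (T (P z)) ((T ∘L P - T) x) : ℂ) = 0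
    rw [h1, hTT, hDP, inner_zero_left, sub_zero]
    have : (inner ℂ (P z) (x - P x) : ℂ) = 0 :=
      Submodule.inner_right_of_mem_orthogonal (hPmem z) (hsubP x)
    have h2 : P x - x = -(x - P x) := by abel
    rw [h2, inner_neg_right, this, neg_zero]

end
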